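/- Fix r > 0, κ > 0, τ ∈ (0,1), T ∈ ℕ₊ and δ ∈ (0,1). Let s₁, …, s_T be i.i.d. uniform on {±1}, and define the sequences a₀ = κ, b₀ = 0, a_{i+1} = (1−τ) a_i + τ f(a_i, b_i), b_{i+1} = (1−τ) b_i + τ s_{i+1} g(a_i, b_i), where f(a,b) = √(((a²−b²) + √(4r² + (a²−b²)²))/2) and g(a,b) = √((−(a²−b²) + √(4r² + (a²−b²)²))/2). Then with probability at least 1 − δ, |b_i| ≤ √(2 r τ log(2T/δ)) simultaneously for all i ∈ {1, …, T}. -/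

import Mathlib

/-!
Along the recursion `|b_i| ≤ a_i` (because `g ≤ f` whenever `|b| ≤ a`), and this forces
`g(a_i, b_i)² ≤ r`. The sign `s_{i+1}` is independent of `(a_i, b_i)`, so averaging over it turns
`exp (λ τ s_{i+1} g)` into `cosh (λ τ g) ≤ exp (λ² τ² r / 2)`; by induction every `b_i` is
sub-Gaussian with variance proxy `τ r`. The threshold `√(2 r τ log (2T/δ))` makes each of the `2T`
one-sided Chernoff tails equal to `δ / (2T)`, and a union bound finishes.
-/

/-- `f(a,b) = √(((a²−b²) + √(4r² + (a²−b²)²))/2)`. -/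
noncomputable def fRep (r a b : ℝ) : ℝ :=
  Real.sqrt (((a ^ 2 - b ^ 2) + Real.sqrt (4 * r ^ 2 + (a ^ 2 - b ^ 2) ^ 2)) / 2)

/-- `g(a,b) = √((−(a²−b²) + √(4r² + (a²−b²)²))/2)`. -/
noncomputable def gRep (r a b : ℝ) : ℝ :=
  Real.sqrt ((-(a ^ 2 - b ^ 2) + Real.sqrt (4 * r ^ 2 + (a ^ 2 - b ^ 2) ^ 2)) / 2)

/-- The Reptile recursion `a₀ = κ`, `b₀ = 0`,
`a_{i+1} = (1−τ) a_i + τ f(a_i, b_i)`, `b_{i+1} = (1−τ) b_i + τ s_{i+1} g(a_i, b_i)`,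
where `s i` is the sign `s_{i+1}`. -/
noncomputable def reptileSeq (r κ τ : ℝ) (s : ℕ → ℝ) : ℕ → ℝ × ℝ
  | 0 => (κ, 0)
  | i + 1 =>
      let p := reptileSeq r κ τ s i
      ((1 - τ) * p.1 + τ * fRep r p.1 p.2,
       (1 - τ) * p.2 + τ * s i * gRep r p.1 p.2)

open MeasureTheory
open scoped ENNReal

/-- Signs `s₁, …, s_T ∈ {±1}` encoded by booleans: `signOf σ i` is the sign
`s_{i+1}` (the one used in the update from step `i` to step `i+1`). -/
noncomputable def signOf {T : ℕ} (σ : Fin T → Bool) : ℕ → ℝ := fun i =>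
  if h : i < T then (if σ ⟨i, h⟩ then 1 else -1) else 1

/-- Uniform distribution over the `2^T` sign patterns. -/
noncomputable def uniformSigns (T : ℕ) : Measure (Fin T → Bool) :=
  (PMF.uniformOfFintype (Fin T → Bool)).toMeasure

open ProbabilityTheory Finset

namespace ProbabilityTheory

variable {Ω : Type*} [MeasurableSpace Ω] {μ : Measure Ω} {c : NNReal} {ε : ℝ}

lemma HasSubgaussianMGF.measureReal_abs_ge_le {X : Ω → ℝ} (h : HasSubgaussianMGF X c μ)
    (hε : 0 ≤ ε) : μ.real {ω | ε ≤ |X ω|} ≤ 2 * Real.exp (-ε ^ 2 / (2 * c)) := by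
  have hunion : {ω | ε ≤ |X ω|} = {ω | ε ≤ X ω} ∪ {ω | ε ≤ (-X) ω} := by
    ext ω; simp [le_abs]
  rw [hunion]
  linarith [measureReal_union_le (μ := μ) {ω | ε ≤ X ω} {ω | ε ≤ (-X) ω},
    h.measure_ge_le hε, h.neg.measure_ge_le hε]

lemma one_sub_le_measureReal_forall_abs_le_of_hasSubgaussianMGF [IsProbabilityMeasure μ]
    {ι : Type*} (s : Finset ι) {X : ι → Ω → ℝ} (h : ∀ i ∈ s, HasSubgaussianMGF (X i) c μ)
    (hε : 0 ≤ ε) :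
    1 - #s * (2 * Real.exp (-ε ^ 2 / (2 * c))) ≤ μ.real {ω | ∀ i ∈ s, |X i ω| ≤ ε} := by
  set good := {ω | ∀ i ∈ s, |X i ω| ≤ ε}
  have hbad : goodᶜ ⊆ ⋃ i ∈ s, {ω | ε ≤ |X i ω|} := by
    intro ω hω
    simp only [good, Set.mem_compl_iff, Set.mem_ofPred_eq, not_forall, not_le] at hω
    obtain ⟨i, hi, hlt⟩ := hω
    exact Set.mem_biUnion hi hlt.le
  have hcover : 1 ≤ μ.real good + μ.real goodᶜ := by
    simpa using measureReal_union_le (μ := μ) good goodᶜ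
  have htail : μ.real goodᶜ ≤ #s * (2 * Real.exp (-ε ^ 2 / (2 * c))) :=
    calc μ.real goodᶜ ≤ ∑ i ∈ s, μ.real {ω | ε ≤ |X i ω|} :=
          (measureReal_mono hbad (measure_ne_top _ _)).trans (measureReal_biUnion_finset_le _ _)
      _ ≤ #s * (2 * Real.exp (-ε ^ 2 / (2 * c))) := by
          simpa using sum_le_card_nsmul _ _ _ fun i hi =>
            (h i hi).measureReal_abs_ge_le hε
  linarith

end ProbabilityTheory

section Dynamics

lemma gRep_le_fRep (r : ℝ) {a b : ℝ} (h : |b| ≤ |a|) : gRep r a b ≤ fRep r a b := by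
  have : 0 ≤ a ^ 2 - b ^ 2 := sub_nonneg.mpr (sq_le_sq.mpr h)
  exact Real.sqrt_le_sqrt (by linarith)

/-- `g² = (√(4r² + x²) - x) / 2` with `x = a² - b² ≥ 0`, and `√(4r² + x²) ≤ 2r + x`. -/
lemma gRep_sq_le {r : ℝ} (hr : 0 ≤ r) {a b : ℝ} (h : |b| ≤ |a|) : gRep r a b ^ 2 ≤ r := by
  rw [gRep]
  set x := a ^ 2 - b ^ 2
  have hx : 0 ≤ x := sub_nonneg.mpr (sq_le_sq.mpr h)
  have hS : Real.sqrt (4 * r ^ 2 + x ^ 2) ≤ 2 * r + x :=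
    Real.sqrt_le_iff.mpr ⟨by positivity, by nlinarith⟩
  have hx_le : x ≤ Real.sqrt (4 * r ^ 2 + x ^ 2) :=
    Real.le_sqrt_of_sq_le (by nlinarith)
  rw [Real.sq_sqrt (by linarith)]
  linarith

variable {r κ τ : ℝ}

lemma reptileSeq_congr {s s' : ℕ → ℝ} {i : ℕ} (h : ∀ j < i, s j = s' j) :
    reptileSeq r κ τ s i = reptileSeq r κ τ s' i := by
  induction i with
  | zero => rfl
  | succ i ih =>
    simp only [reptileSeq, ih fun j hj => h j (by omega), h i (by omega)]

lemma abs_snd_reptileSeq_le_fst (hκ : 0 ≤ κ) (hτ : τ ∈ Set.Icc (0 : ℝ) 1) {s : ℕ → ℝ}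
    (hs : ∀ i, |s i| ≤ 1) (i : ℕ) :
    |(reptileSeq r κ τ s i).2| ≤ (reptileSeq r κ τ s i).1 := by
  induction i with
  | zero => simpa [reptileSeq] using hκ
  | succ i ih =>
    set a := (reptileSeq r κ τ s i).1
    set b := (reptileSeq r κ τ s i).2
    have hfg : gRep r a b ≤ fRep r a b := gRep_le_fRep r (ih.trans (le_abs_self a))
    have hg : 0 ≤ gRep r a b := Real.sqrt_nonneg _
    have hsg : |s i * gRep r a b| ≤ gRep r a b := by
      rw [abs_mul, abs_of_nonneg hg]; exact mul_le_of_le_one_left hg (hs i)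
    obtain ⟨hτ0, hτ1⟩ := hτ
    calc |(1 - τ) * b + τ * s i * gRep r a b|
        ≤ (1 - τ) * |b| + τ * |s i * gRep r a b| := by
          refine (abs_add_le _ _).trans_eq ?_
          rw [mul_assoc, abs_mul, abs_mul, abs_of_nonneg (by linarith : 0 ≤ 1 - τ),
            abs_of_nonneg hτ0]
      _ ≤ (1 - τ) * a + τ * fRep r a b := by gcongr; linarith

lemma gRep_reptileSeq_sq_le (hr : 0 ≤ r) (hκ : 0 ≤ κ) (hτ : τ ∈ Set.Icc (0 : ℝ) 1)
    {s : ℕ → ℝ} (hs : ∀ i, |s i| ≤ 1) (i : ℕ) :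
    gRep r (reptileSeq r κ τ s i).1 (reptileSeq r κ τ s i).2 ^ 2 ≤ r :=
  gRep_sq_le hr ((abs_snd_reptileSeq_le_fst hκ hτ hs i).trans (le_abs_self _))

end Dynamics

section Signs

variable {T : ℕ}

lemma sq_signOf (σ : Fin T → Bool) (i : ℕ) : signOf σ i ^ 2 = 1 := by
  unfold signOf; split_ifs <;> norm_num

lemma abs_signOf (σ : Fin T → Bool) (i : ℕ) : |signOf σ i| = 1 := by
  unfold signOf; split_ifs <;> norm_num

def flipAt (j : Fin T) : Equiv.Perm (Fin T → Bool) :=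
  Function.Involutive.toPerm (fun σ => Function.update σ j (!σ j)) fun σ => by
    ext k; by_cases hk : k = j <;> simp [hk]

@[simp]
lemma flipAt_apply (j : Fin T) (σ : Fin T → Bool) :
    flipAt j σ = Function.update σ j (!σ j) :=
  rfl

lemma signOf_flipAt_of_ne (j : Fin T) (σ : Fin T → Bool) {i : ℕ} (hi : i ≠ j) :
    signOf (flipAt j σ) i = signOf σ i := by
  by_cases h : i < T
  · have : (⟨i, h⟩ : Fin T) ≠ j := fun h' => hi (congrArg Fin.val h')
    simp [signOf, h, this]
  · simp [signOf, h]

lemma signOf_flipAt_self (j : Fin T) (σ : Fin T → Bool) :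
    signOf (flipAt j σ) j = -signOf σ j := by
  cases h : σ j <;> simp [signOf, h]

lemma reptileSeq_signOf_flipAt (r κ τ : ℝ) (j : Fin T) (σ : Fin T → Bool) {i : ℕ}
    (hi : i ≤ j) :
    reptileSeq r κ τ (signOf (flipAt j σ)) i = reptileSeq r κ τ (signOf σ) i :=
  reptileSeq_congr fun k hk => signOf_flipAt_of_ne j σ (by omega)

/-- Pairing each pattern with its `j`-flip replaces `exp (s v)` by `cosh v`, and
`cosh v ≤ exp (v ^ 2 / 2)`. -/
lemma sum_exp_add_signOf_mul_le (j : Fin T) {u v : (Fin T → Bool) → ℝ}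
    (hu : ∀ σ, u (flipAt j σ) = u σ) (hv : ∀ σ, v (flipAt j σ) = v σ) {c : ℝ}
    (hvc : ∀ σ, v σ ^ 2 ≤ c) :
    ∑ σ, Real.exp (u σ + signOf σ j * v σ) ≤ Real.exp (c / 2) * ∑ σ, Real.exp (u σ) := by
  have hflip : ∑ σ, Real.exp (u σ + signOf σ j * v σ) =
      ∑ σ, Real.exp (u σ - signOf σ j * v σ) := by
    rw [← Equiv.sum_comp (flipAt j)]
    simp only [hu, hv, signOf_flipAt_self, neg_mul, ← sub_eq_add_neg]
  have hcosh : ∀ σ, Real.cosh (signOf σ j * v σ) ≤ Real.exp (c / 2) := fun σ =>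
    (Real.cosh_le_exp_half_sq _).trans <| Real.exp_le_exp.mpr <| by
      rw [mul_pow, sq_signOf, one_mul]; linarith [hvc σ]
  calc ∑ σ, Real.exp (u σ + signOf σ j * v σ)
      = (∑ σ, Real.exp (u σ + signOf σ j * v σ) +
          ∑ σ, Real.exp (u σ - signOf σ j * v σ)) / 2 := by rw [← hflip]; ring
    _ = ∑ σ, Real.exp (u σ) * Real.cosh (signOf σ j * v σ) := by
        rw [← sum_add_distrib, sum_div]
        refine sum_congr rfl fun σ _ => ?_
        rw [Real.cosh_eq, Real.exp_add, sub_eq_add_neg, Real.exp_add]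
        ring
    _ ≤ ∑ σ, Real.exp (u σ) * Real.exp (c / 2) :=
        sum_le_sum fun σ _ => by gcongr; exact hcosh σ
    _ = Real.exp (c / 2) * ∑ σ, Real.exp (u σ) := by rw [mul_sum]; simp only [mul_comm]

end Signs

lemma integral_uniformSigns (T : ℕ) (F : (Fin T → Bool) → ℝ) :
    ∫ σ, F σ ∂uniformSigns T = (∑ σ, F σ) / 2 ^ T := by
  simp [uniformSigns, PMF.integral_eq_sum, div_eq_inv_mul, mul_sum]

/-- The variance proxy evolves as `v ↦ (1 - τ)² v + τ² r`, which keeps `v ≤ τ r`. -/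
lemma sum_exp_mul_snd_reptileSeq_le {r κ τ : ℝ} (hr : 0 ≤ r) (hκ : 0 ≤ κ)
    (hτ : τ ∈ Set.Icc (0 : ℝ) 1) {T i : ℕ} (hi : i ≤ T) (l : ℝ) :
    ∑ σ : Fin T → Bool, Real.exp (l * (reptileSeq r κ τ (signOf σ) i).2) ≤
      2 ^ T * Real.exp (τ * r * l ^ 2 / 2) := by
  induction i generalizing l with
  | zero =>
    simp only [reptileSeq, mul_zero, Real.exp_zero, sum_const, card_univ,
      Fintype.card_fun, Fintype.card_bool, Fintype.card_fin, nsmul_eq_mul, mul_one]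
    push_cast
    exact le_mul_of_one_le_right (by positivity) (Real.one_le_exp
      (by have := hτ.1; positivity))
  | succ i ih =>
    let j : Fin T := ⟨i, hi⟩
    have hsplit : ∀ σ : Fin T → Bool, l * (reptileSeq r κ τ (signOf σ) (i + 1)).2 =
        l * (1 - τ) * (reptileSeq r κ τ (signOf σ) i).2 + signOf σ j *
          (l * τ * gRep r (reptileSeq r κ τ (signOf σ) i).1 (reptileSeq r κ τ (signOf σ) i).2) :=
      fun σ => by simp only [reptileSeq, j]; ring
    have hstep := sum_exp_add_signOf_mul_le j
      (u := fun σ => l * (1 - τ) * (reptileSeq r κ τ (signOf σ) i).2)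
      (v := fun σ => l * τ *
        gRep r (reptileSeq r κ τ (signOf σ) i).1 (reptileSeq r κ τ (signOf σ) i).2)
      (c := l ^ 2 * τ ^ 2 * r)
      (fun σ => by rw [reptileSeq_signOf_flipAt r κ τ j σ le_rfl])
      (fun σ => by rw [reptileSeq_signOf_flipAt r κ τ j σ le_rfl])
      (fun σ => by
        have := gRep_reptileSeq_sq_le hr hκ hτ (fun k => (abs_signOf σ k).le) i
        rw [mul_pow, mul_pow]; gcongr)
    simp only [hsplit]
    calc _ ≤ Real.exp (l ^ 2 * τ ^ 2 * r / 2) *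
          (2 ^ T * Real.exp (τ * r * (l * (1 - τ)) ^ 2 / 2)) :=
          hstep.trans (by gcongr; exact ih (by omega) _)
      _ = 2 ^ T * Real.exp (l ^ 2 * τ ^ 2 * r / 2 + τ * r * (l * (1 - τ)) ^ 2 / 2) := by
          rw [Real.exp_add]; ring
      _ ≤ 2 ^ T * Real.exp (τ * r * l ^ 2 / 2) := by
          gcongr
          nlinarith [mul_nonneg (mul_nonneg (mul_nonneg hτ.1 hr) (sq_nonneg l))
            (mul_nonneg hτ.1 (sub_nonneg.mpr hτ.2))]

instance (T : ℕ) : IsProbabilityMeasure (uniformSigns T) := by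
  unfold uniformSigns; infer_instance

lemma hasSubgaussianMGF_snd_reptileSeq {r κ τ : ℝ} (hr : 0 ≤ r) (hκ : 0 ≤ κ)
    (hτ : τ ∈ Set.Icc (0 : ℝ) 1) {T i : ℕ} (hi : i ≤ T) :
    HasSubgaussianMGF (fun σ => (reptileSeq r κ τ (signOf σ) i).2) (τ * r).toNNReal
      (uniformSigns T) where
  integrable_exp_mul _ := .of_finite
  mgf_le l := by
    rw [mgf, integral_uniformSigns, div_le_iff₀ (by positivity),
      Real.coe_toNNReal _ (mul_nonneg hτ.1 hr), mul_comm]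
    exact sum_exp_mul_snd_reptileSeq_le hr hκ hτ hi l

theorem reptile_b_highprob_bound
    (r : ℝ) (hr : 0 < r) (κ : ℝ) (hκ : 0 < κ) (τ : ℝ) (hτ : τ ∈ Set.Ioo (0 : ℝ) 1)
    (T : ℕ) (hT : 1 ≤ T) (δ : ℝ) (hδ : δ ∈ Set.Ioo (0 : ℝ) 1) :
    ENNReal.ofReal (1 - δ) ≤
      uniformSigns T
        {σ : Fin T → Bool | ∀ i ∈ Finset.Icc 1 T,
          |(reptileSeq r κ τ (signOf σ) i).2| ≤
            Real.sqrt (2 * r * τ * Real.log (2 * (T : ℝ) / δ))} := by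
  obtain ⟨hτ0, hτ1⟩ := hτ
  obtain ⟨hδ0, hδ1⟩ := hδ
  set L := Real.log (2 * (T : ℝ) / δ)
  have hT_real : (1 : ℝ) ≤ T := by exact_mod_cast hT
  have hL : 0 < L := Real.log_pos <| by rw [lt_div_iff₀ hδ0]; linarith
  have key := one_sub_le_measureReal_forall_abs_le_of_hasSubgaussianMGF (Icc 1 T)
    (fun i hi => hasSubgaussianMGF_snd_reptileSeq hr.le hκ.le ⟨hτ0.le, hτ1.le⟩
      (mem_Icc.mp hi).2) (Real.sqrt_nonneg (2 * r * τ * L))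
  have hfail : #(Icc 1 T) *
      (2 * Real.exp (-Real.sqrt (2 * r * τ * L) ^ 2 / (2 * (τ * r).toNNReal))) = δ := by
    have hexp : -Real.sqrt (2 * r * τ * L) ^ 2 / (2 * (τ * r).toNNReal) = -L := by
      rw [Real.sq_sqrt (by positivity), Real.coe_toNNReal _ (by positivity)]
      field_simp
    rw [hexp, Real.exp_neg, Real.exp_log (by positivity), Nat.card_Icc]
    field_simp
    simp
  rw [hfail] at key
  exact ENNReal.ofReal_le_of_le_toReal key
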